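/- arXiv:2303.14252 — 4 statements merged into one kernel-verified Lean document; each statement's English description precedes it below -/
import Mathlib

section
/- Let κ be an infinite cardinal, α an ordinal, let ⟨𝓕_{β,η} : (β,η) ∈ α × κ⟩ be a stratified set of filters on κ, and let X ⊆ κ. Then there is a stratified set of filters ⟨𝓖_{β,η} : (β,η) ∈ α × κ⟩ on κ such that for all (β,η) ∈ α × κ: 𝓕_{β,η} ⊆ 𝓖_{β,η}, and X ∈ 𝓖_{β,η} or κ \ X ∈ 𝓖_{β,η}. -/
open Cardinal Set

universe u

/-- A stratified set of filters on `κ` (indexed by pairs `(β, η) ∈ α × κ`): a matrix of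
proper filters such that (i) there is a choice of sets `c β η ∈ F β η` with each row
`⟨c β η : η < κ⟩` pairwise disjoint, and (ii) whenever `β < δ < α`, `η < κ` and
`G ∈ F β η`, the set `{ζ < κ : G ∈ F δ ζ}` has cardinality `κ`. -/
def IsStratified {K : Type u} (α : Ordinal.{u}) (F : Ordinal.{u} → K → Filter K) : Prop :=
  (∀ β < α, ∀ η : K, (F β η).NeBot) ∧
  (∃ c : Ordinal.{u} → K → Set K,
      (∀ β < α, ∀ η : K, c β η ∈ F β η) ∧
      (∀ β < α, ∀ η ζ : K, η ≠ ζ → Disjoint (c β η) (c β ζ))) ∧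
  (∀ β δ : Ordinal.{u}, β < δ → δ < α → ∀ η : K, ∀ G ∈ F β η,
      #{ζ : K | G ∈ F δ ζ} = #K)

open Filter

namespace StratifiedAux

variable {K : Type u}

/-- Auxiliary: if a subset of a set of full size has small cardinality, the difference
still has full size. -/
lemma card_diff (hK : aleph0 ≤ #K) {S W : Set K} (hS : #S = #K) (hW : #W < #K) :
    #(S \ W : Set K) = #K := by
  refine le_antisymm (Cardinal.mk_set_le _) ?_
  by_contra h
  push_neg at h
  have h1 : #S ≤ #(S \ W : Set K) + #W := by
    calc #S ≤ #((S \ W) ∪ W : Set K) :=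
          Cardinal.mk_le_mk_of_subset (fun x hx => by
            by_cases hw : x ∈ W
            · exact Or.inr hw
            · exact Or.inl ⟨hx, hw⟩)
      _ ≤ #(S \ W : Set K) + #W := Cardinal.mk_union_le _ _
  have h2 : #(S \ W : Set K) + #W < #K := Cardinal.add_lt_of_lt hK h hW
  rw [hS] at h1
  exact absurd (lt_of_le_of_lt h1 h2) (lt_irrefl _)

lemma card_eq_of_subset {A B : Set K} (h : A ⊆ B) (hA : #A = #K) : #B = #K :=
  le_antisymm (Cardinal.mk_set_le _) (hA ▸ Cardinal.mk_le_mk_of_subset h)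

lemma nonempty_of_card (hK : aleph0 ≤ #K) {S : Set K} (hS : #S = #K) : S.Nonempty := by
  rw [← Set.nonempty_coe_sort, ← Cardinal.mk_ne_zero_iff, hS]
  exact ne_of_gt (lt_of_lt_of_le aleph0_pos hK)

/-- The monotone operator whose greatest fixed point will indicate the pairs at which
we add `X` to the filter. -/
def Phi (α : Ordinal.{u}) (X : Set K) (F : Ordinal.{u} → K → Filter K)
    (P : Set (Ordinal.{u} × K)) : Set (Ordinal.{u} × K) :=
  {p | (F p.1 p.2 ⊓ 𝓟 X).NeBot ∧
    ∀ δ, p.1 < δ → δ < α → ∀ G ∈ F p.1 p.2,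
      #{ζ : K | G ∈ F δ ζ ∧ (δ, ζ) ∈ P} = #K}

/-- The greatest fixed point of `Phi`: the union of all post-fixed points. -/
def Pstar (α : Ordinal.{u}) (X : Set K) (F : Ordinal.{u} → K → Filter K) :
    Set (Ordinal.{u} × K) :=
  {p | ∃ P, P ⊆ Phi α X F P ∧ p ∈ P}

lemma phi_mono {α : Ordinal.{u}} {X : Set K} {F : Ordinal.{u} → K → Filter K}
    {P Q : Set (Ordinal.{u} × K)} (h : P ⊆ Q) : Phi α X F P ⊆ Phi α X F Q := by
  rintro p ⟨h1, h2⟩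
  refine ⟨h1, fun δ hδ1 hδ2 G hG => ?_⟩
  exact card_eq_of_subset (fun ζ hζ => ⟨hζ.1, h hζ.2⟩) (h2 δ hδ1 hδ2 G hG)

lemma subset_pstar {α : Ordinal.{u}} {X : Set K} {F : Ordinal.{u} → K → Filter K}
    {P : Set (Ordinal.{u} × K)} (h : P ⊆ Phi α X F P) : P ⊆ Pstar α X F :=
  fun p hp => ⟨P, h, hp⟩

lemma pstar_post {α : Ordinal.{u}} {X : Set K} {F : Ordinal.{u} → K → Filter K} :
    Pstar α X F ⊆ Phi α X F (Pstar α X F) := by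
  rintro p ⟨P, hP, hp⟩
  exact phi_mono (subset_pstar hP) (hP hp)

/-- Pairs whose filter already contains `X` belong to the greatest fixed point. -/
lemma mem_pstar_of_mem {α : Ordinal.{u}} {X : Set K} {F : Ordinal.{u} → K → Filter K}
    (hF : IsStratified α F) (p : Ordinal.{u} × K) (hα : p.1 < α) (hX : X ∈ F p.1 p.2) :
    p ∈ Pstar α X F := by
  have hT : {q : Ordinal.{u} × K | q.1 < α ∧ X ∈ F q.1 q.2} ⊆
      Phi α X F {q : Ordinal.{u} × K | q.1 < α ∧ X ∈ F q.1 q.2} := by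
    rintro q ⟨hq1, hq2⟩
    constructor
    · have : F q.1 q.2 ⊓ 𝓟 X = F q.1 q.2 := inf_eq_left.2 (le_principal_iff.2 hq2)
      rw [this]
      exact hF.1 q.1 hq1 q.2
    · intro δ hδ1 hδ2 G hG
      refine card_eq_of_subset (B := {ζ : K | G ∈ F δ ζ ∧ (δ, ζ) ∈ _}) ?_
        (hF.2.2 q.1 δ hδ1 hδ2 q.2 (G ∩ X) (inter_mem hG hq2))
      intro ζ hζ
      exact ⟨mem_of_superset hζ inter_subset_left,
        hδ2, mem_of_superset hζ inter_subset_right⟩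
  exact subset_pstar hT ⟨hα, hX⟩

/-- Key coinduction: if at some pair the set of "bad" columns above is small, then the
pair itself belongs to the greatest fixed point. -/
lemma mem_pstar_of_small {α : Ordinal.{u}} {X : Set K} {F : Ordinal.{u} → K → Filter K}
    (hK : aleph0 ≤ #K) (hF : IsStratified α F) (p : Ordinal.{u} × K)
    (h : ∃ δ, p.1 < δ ∧ δ < α ∧ ∃ G ∈ F p.1 p.2,
      #{ζ : K | G ∈ F δ ζ ∧ (δ, ζ) ∉ Pstar α X F} < #K) :
    p ∈ Pstar α X F := by
  set R : Set (Ordinal.{u} × K) :=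
    {q | ∃ δ, q.1 < δ ∧ δ < α ∧ ∃ G ∈ F q.1 q.2,
      #{ζ : K | G ∈ F δ ζ ∧ (δ, ζ) ∉ Pstar α X F} < #K} with hR
  have hpost : Pstar α X F ∪ R ⊆ Phi α X F (Pstar α X F ∪ R) := by
    rintro q (hq | hq)
    · exact phi_mono subset_union_left (pstar_post hq)
    · obtain ⟨δ, hβδ, hδα, G, hG, hW⟩ := hq
      set W : Set K := {ζ : K | G ∈ F δ ζ ∧ (δ, ζ) ∉ Pstar α X F} with hWdef
      -- for any F' in the filter, the columns at level δ where G ∩ F' lives and which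
      -- are in Pstar form a set of full size
      have key : ∀ F' ∈ F q.1 q.2,
          #({ζ : K | G ∩ F' ∈ F δ ζ} \ W : Set K) = #K := by
        intro F' hF'
        exact card_diff hK (hF.2.2 q.1 δ hβδ hδα q.2 (G ∩ F') (inter_mem hG hF')) hW
      have keymem : ∀ F' : Set K, ∀ ζ : K, ζ ∈ ({ζ : K | G ∩ F' ∈ F δ ζ} \ W : Set K) →
          G ∩ F' ∈ F δ ζ ∧ (δ, ζ) ∈ Pstar α X F := by
        intro F' ζ hζ
        have h1 : G ∩ F' ∈ F δ ζ := hζ.1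
        have h2 : (δ, ζ) ∈ Pstar α X F := by
          by_contra hc
          exact hζ.2 ⟨mem_of_superset h1 inter_subset_left, hc⟩
        exact ⟨h1, h2⟩
      constructor
      · -- X is compatible with F q.1 q.2
        rw [Filter.inf_principal_neBot_iff]
        intro U hU
        obtain ⟨ζ, hζ⟩ := nonempty_of_card hK (key U hU)
        obtain ⟨h1, h2⟩ := keymem U ζ hζ
        have hne : ((G ∩ U) ∩ X).Nonempty :=
          (Filter.inf_principal_neBot_iff.1 (pstar_post h2).1) (G ∩ U) h1
        exact hne.mono (fun x hx => ⟨hx.1.2, hx.2⟩)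
      · intro δ' hδ'1 hδ'2 F' hF'
        rcases lt_trichotomy δ' δ with hlt | heq | hgt
        · -- below δ: every column containing G ∩ F' is in R
          refine card_eq_of_subset ?_
            (hF.2.2 q.1 δ' hδ'1 hδ'2 q.2 (G ∩ F') (inter_mem hG hF'))
          intro ζ' hζ'
          refine ⟨mem_of_superset hζ' inter_subset_right, Or.inr ?_⟩
          exact ⟨δ, hlt, hδα, G, mem_of_superset hζ' inter_subset_left, hW⟩
        · subst heq
          refine card_eq_of_subset ?_ (key F' hF')
          intro ζ hζ
          obtain ⟨h1, h2⟩ := keymem F' ζ hζ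
          exact ⟨mem_of_superset h1 inter_subset_right, Or.inl h2⟩
        · -- above δ: use a good column at level δ
          obtain ⟨ζ₀, hζ₀⟩ := nonempty_of_card hK (key F' hF')
          obtain ⟨h1, h2⟩ := keymem F' ζ₀ hζ₀
          refine card_eq_of_subset ?_ ((pstar_post h2).2 δ' hgt hδ'2 (G ∩ F') h1)
          intro ζ' hζ'
          exact ⟨mem_of_superset hζ'.1 inter_subset_right, Or.inl hζ'.2⟩
  exact subset_pstar hpost (Or.inr h)

end StratifiedAux

open StratifiedAux in
/-- Given a stratified set of filters `F` on `κ` and a set `X ⊆ κ`, there is a stratified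
set of filters `G` on `κ` such that for all `(β, η) ∈ α × κ` we have `F β η ⊆ G β η`,
and `X ∈ G β η` or `κ \ X ∈ G β η`. -/
theorem stratified_refining {K : Type u} (hK : aleph0 ≤ #K)
    (α : Ordinal.{u}) (F : Ordinal.{u} → K → Filter K) (hF : IsStratified α F)
    (X : Set K) :
    ∃ G : Ordinal.{u} → K → Filter K, IsStratified α G ∧
      ∀ β < α, ∀ η : K,
        (∀ s ∈ F β η, s ∈ G β η) ∧ (X ∈ G β η ∨ Xᶜ ∈ G β η) := by
  classical
  set P : Set (Ordinal.{u} × K) := Pstar α X F with hP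
  refine ⟨fun β η => F β η ⊓ 𝓟 (if (β, η) ∈ P then X else Xᶜ), ⟨?_, ?_, ?_⟩, ?_⟩
  · -- NeBot
    intro β hβ η
    by_cases h : (β, η) ∈ P
    · simp only [if_pos h]
      exact (pstar_post h).1
    · simp only [if_neg h]
      rw [Filter.inf_principal_neBot_iff]
      intro U hU
      rw [Set.inter_compl_nonempty_iff]
      intro hsub
      exact h (mem_pstar_of_mem hF (β, η) hβ (mem_of_superset hU hsub))
  · -- choice of pairwise disjoint sets
    obtain ⟨c, hc1, hc2⟩ := hF.2.1
    refine ⟨fun β η => c β η ∩ (if (β, η) ∈ P then X else Xᶜ), ?_, ?_⟩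
    · intro β hβ η
      exact inter_mem (mem_inf_of_left (hc1 β hβ η))
        (mem_inf_of_right (mem_principal_self _))
    · intro β hβ η ζ hne
      exact (hc2 β hβ η ζ hne).mono inter_subset_left inter_subset_left
  · -- stratification counts
    intro β δ hβδ hδα η G' hG'
    by_cases h : (β, η) ∈ P
    · simp only [if_pos h] at hG'
      have hF₀ : {x | x ∈ X → x ∈ G'} ∈ F β η := Filter.mem_inf_principal.1 hG'
      refine card_eq_of_subset ?_ ((pstar_post h).2 δ hβδ hδα _ hF₀)
      intro ζ hζ
      show G' ∈ F δ ζ ⊓ 𝓟 (if (δ, ζ) ∈ P then X else Xᶜ)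
      rw [if_pos hζ.2]
      exact Filter.mem_inf_principal.2 hζ.1
    · simp only [if_neg h] at hG'
      have hF₀ : {x | x ∈ Xᶜ → x ∈ G'} ∈ F β η := Filter.mem_inf_principal.1 hG'
      have hA : #{ζ : K | {x | x ∈ Xᶜ → x ∈ G'} ∈ F δ ζ ∧ (δ, ζ) ∉ P} = #K := by
        refine le_antisymm (Cardinal.mk_set_le _) (not_lt.1 ?_)
        intro hsmall
        exact h (mem_pstar_of_small hK hF (β, η) ⟨δ, hβδ, hδα, _, hF₀, hsmall⟩)
      refine card_eq_of_subset ?_ hA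
      intro ζ hζ
      show G' ∈ F δ ζ ⊓ 𝓟 (if (δ, ζ) ∈ P then X else Xᶜ)
      rw [if_neg hζ.2]
      exact Filter.mem_inf_principal.2 hζ.1
  · -- refinement and decidedness
    intro β hβ η
    refine ⟨fun s hs => mem_inf_of_left hs, ?_⟩
    by_cases h : (β, η) ∈ P
    · left
      show X ∈ F β η ⊓ 𝓟 (if (β, η) ∈ P then X else Xᶜ)
      rw [if_pos h]
      exact mem_inf_of_right (mem_principal_self _)
    · right
      show Xᶜ ∈ F β η ⊓ 𝓟 (if (β, η) ∈ P then X else Xᶜ)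
      rw [if_neg h]
      exact mem_inf_of_right (mem_principal_self _)
end

section
/- Let κ be an infinite cardinal, α an ordinal, and let ⟨𝓕_{β,η} : (β,η) ∈ α × κ⟩ be a stratified set of filters on κ. If β < α with β + 1 < α, η < κ and F ∈ 𝓕_{β,η}, then F has cardinality κ. In particular, all filters in a stratified set are uniform, except possibly those in the last row when α is a successor ordinal. -/
open Cardinal Set

universe u

/-- In a stratified set of filters on `κ`, if `β + 1 < α`, `η < κ` and `G ∈ F β η`,
then `G` has cardinality `κ`.  In particular all the filters are uniform, except
possibly those in the last row when `α` is a successor ordinal. -/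
theorem stratified_members_have_full_cardinality {K : Type u} (hK : aleph0 ≤ #K)
    (α : Ordinal.{u}) (F : Ordinal.{u} → K → Filter K) (hF : IsStratified α F)
    (β : Ordinal.{u}) (hβ : β + 1 < α) (η : K) (G : Set K) (hG : G ∈ F β η) :
    #G = #K := by
  obtain ⟨hne, ⟨c, hc1, hc2⟩, hstrat⟩ := hF
  have hcard : #{ζ : K | G ∈ F (β + 1) ζ} = #K :=
    hstrat β (β + 1) (lt_add_one β) hβ η G hG
  -- pick a point in G ∩ c (β+1) ζ for each ζ in the set
  have hpt : ∀ ζ : {ζ : K | G ∈ F (β + 1) ζ}, ∃ x, x ∈ G ∩ c (β + 1) ζ := by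
    rintro ⟨ζ, hζ⟩
    haveI := hne (β + 1) hβ ζ
    exact Filter.nonempty_of_mem (Filter.inter_mem hζ (hc1 (β + 1) hβ ζ))
  choose f hf using hpt
  have hinj : Function.Injective (fun ζ : {ζ : K | G ∈ F (β + 1) ζ} =>
      (⟨f ζ, (hf ζ).1⟩ : G)) := by
    intro ζ1 ζ2 h
    have hfe : f ζ1 = f ζ2 := congrArg Subtype.val h
    by_contra hne'
    have hζne : (ζ1 : K) ≠ (ζ2 : K) := fun h' => hne' (Subtype.ext h')
    exact (hc2 (β + 1) hβ ζ1 ζ2 hζne).ne_of_mem (hf ζ1).2 (hfe ▸ (hf ζ2).2) rfl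
  have hle : #K ≤ #G := by
    calc #K = #{ζ : K | G ∈ F (β + 1) ζ} := hcard.symm
    _ ≤ #G := Cardinal.mk_le_of_injective hinj
  exact le_antisymm (Cardinal.mk_set_le G) hle
end

section
/- Let κ be an infinite cardinal, α an ordinal, let ⟨𝓕_{β,η} : (β,η) ∈ α × κ⟩ be a stratified set of filters on κ, and let C ⊆ α × κ. Then the closure iteration ⟨C_ξ⟩ stabilizes at step κ^+: C_{κ^+ + 1} = C_{κ^+}. -/
open Cardinal Set

universe u

/-- The closure iteration: `C₀ = C`; `C_{ξ+1} = C_ξ ∪ {(β,η) : ∃ ε, β < ε < α and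
∃ G ∈ F β η with #{ζ < κ : G ∈ F ε ζ and (ε,ζ) ∉ C_ξ} < κ}`; and at limits
`C_λ = ⋃_{ξ<λ} C_ξ`. -/
noncomputable def closIter {K : Type u} (α : Ordinal.{u}) (F : Ordinal.{u} → K → Filter K)
    (C : Set (Ordinal.{u} × K)) : Ordinal.{u} → Set (Ordinal.{u} × K) := fun ξ =>
  Ordinal.limitRecOn ξ C
    (fun _ Cp => Cp ∪ {p : Ordinal.{u} × K | ∃ ε : Ordinal.{u}, p.1 < ε ∧ ε < α ∧
        ∃ G ∈ F p.1 p.2, #{ζ : K | G ∈ F ε ζ ∧ (ε, ζ) ∉ Cp} < #K})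
    (fun o _ ih => ⋃ (ξ' : Ordinal.{u}) (h : ξ' < o), ih ξ' h)

/-!
The iteration is increasing and continuous at limits, and whether a point enters at step `ξ + 1`
depends, for each row `ε`, only on the row's trace `{ζ | (ε, ζ) ∈ C_ξ}`, a set of size `≤ κ`.
At the limit `κ⁺`, each point of such a trace entered at a stage below `κ⁺`, and since `κ⁺` is
regular the whole trace is already present at a single stage `ξ < κ⁺`. So every point added at
step `κ⁺ + 1` was already added at step `ξ + 1 ≤ κ⁺`.
-/

theorem Set.exists_lt_subset_of_mk_lt_cof {β : Type u} {s : Ordinal.{u} → Set β}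
    (hs : Monotone s) {o : Ordinal.{u}} (ho : s o ⊆ ⋃ ξ < o, s ξ) {t : Set β} (ht : t ⊆ s o)
    (htc : #t < o.cof) : ∃ ξ < o, t ⊆ s ξ := by
  have hstage : ∀ x : t, ∃ ξ < o, x.1 ∈ s ξ := fun x => by simpa using ho (ht x.2)
  choose f hfo hf using hstage
  exact ⟨⨆ x, f x, Ordinal.iSup_lt_of_lt_cof htc hfo,
    fun x hx => hs (Ordinal.le_iSup f ⟨x, hx⟩) (hf ⟨x, hx⟩)⟩

section closIter

variable {K : Type u} (α : Ordinal.{u}) (F : Ordinal.{u} → K → Filter K) (C : Set (Ordinal.{u} × K))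

theorem closIter_add_one (ξ : Ordinal.{u}) :
    closIter α F C (ξ + 1) = closIter α F C ξ ∪
      {p : Ordinal.{u} × K | ∃ ε : Ordinal.{u}, p.1 < ε ∧ ε < α ∧
        ∃ G ∈ F p.1 p.2, #{ζ : K | G ∈ F ε ζ ∧ (ε, ζ) ∉ closIter α F C ξ} < #K} :=
  Ordinal.limitRecOn_add_one _ _ _ _

theorem closIter_limit {ξ : Ordinal.{u}} (hξ : Order.IsSuccLimit ξ) :
    closIter α F C ξ = ⋃ ξ' < ξ, closIter α F C ξ' :=
  Ordinal.limitRecOn_limit _ _ _ _ hξ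

theorem closIter_mono : Monotone (closIter α F C) := by
  intro ξ ξ' hle
  induction ξ' using Ordinal.limitRecOn with
  | zero => rw [nonpos_iff_eq_zero.mp hle]
  | add_one o ih =>
    rcases hle.eq_or_lt with rfl | hlt
    · exact subset_rfl
    · rw [closIter_add_one]
      exact (ih (Order.lt_add_one_iff.mp hlt)).trans subset_union_left
  | limit o hlim _ =>
    rcases hle.eq_or_lt with rfl | hlt
    · exact subset_rfl
    · rw [closIter_limit α F C hlim]
      exact subset_biUnion_of_mem (u := closIter α F C) hlt

theorem closIter_add_one_eq_of_mk_lt_cof {o : Ordinal.{u}} (ho : Order.IsSuccLimit o)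
    (hK : #K < o.cof) : closIter α F C (o + 1) = closIter α F C o := by
  refine (closIter_add_one α F C o).trans (union_eq_left.mpr ?_)
  rintro p ⟨ε, hpε, hεα, G, hG, hsmall⟩
  obtain ⟨ξ, hξo, hrow⟩ := exists_lt_subset_of_mk_lt_cof
    (s := fun ξ => Prod.mk ε ⁻¹' closIter α F C ξ)
    (fun _ _ h => preimage_mono (closIter_mono α F C h))
    (by rw [closIter_limit α F C ho, preimage_iUnion₂]) subset_rfl ((mk_set_le _).trans_lt hK)
  have hsmall' : #{ζ : K | G ∈ F ε ζ ∧ (ε, ζ) ∉ closIter α F C ξ} < #K := by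
    refine (mk_le_mk_of_subset ?_).trans_lt hsmall
    exact fun ζ ⟨hζG, hζξ⟩ => ⟨hζG, fun hζo => hζξ (hrow hζo)⟩
  have hpξ : p ∈ closIter α F C (ξ + 1) :=
    (closIter_add_one α F C ξ).symm ▸ Or.inr ⟨ε, hpε, hεα, G, hG, hsmall'⟩
  exact closIter_mono α F C (Order.add_one_le_of_lt hξo) hpξ

end closIter

theorem closIter_stabilizes_general {K : Type u} (hK : aleph0 ≤ #K)
    (α : Ordinal.{u}) (F : Ordinal.{u} → K → Filter K)
    (C : Set (Ordinal.{u} × K)) :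
    closIter α F C ((Order.succ (#K)).ord + 1) = closIter α F C (Order.succ (#K)).ord := by
  refine closIter_add_one_eq_of_mk_lt_cof α F C
    (isSuccLimit_ord (hK.trans (Order.le_succ _))) ?_
  rw [(isRegular_succ hK).cof_ord]
  exact Order.lt_succ _

/-- For a stratified set of filters on `κ` and any `C ⊆ α × κ`, the closure iteration
stabilizes at step `κ⁺`: `C_{κ⁺ + 1} = C_{κ⁺}`. -/
theorem closIter_stabilizes {K : Type u} (hK : aleph0 ≤ #K)
    (α : Ordinal.{u}) (F : Ordinal.{u} → K → Filter K) (hF : IsStratified α F)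
    (C : Set (Ordinal.{u} × K)) (hC : ∀ p ∈ C, p.1 < α) :
    closIter α F C ((Order.succ (#K)).ord + 1) = closIter α F C (Order.succ (#K)).ord :=
  closIter_stabilizes_general hK α F C
end

section
/- Let κ be an infinite cardinal, let w be an ultrafilter on κ, and let ⟨v_ζ : ζ < κ⟩ be a family of ultrafilters on κ for which there are pairwise disjoint sets ⟨W_ζ : ζ < κ⟩ with W_ζ ∈ v_ζ for every ζ. Let u be an ultrafilter on κ such that (i) for every U ∈ w the set ⋃_{ξ∈U} W_ξ belongs to u, and (ii) for every V ∈ u the set {ζ < κ : V ∈ v_ζ} has cardinality κ. Then u = Σ(⟨v_ζ⟩, w), i.e., for every V ⊆ κ, V ∈ u if and only if {ζ < κ : V ∈ v_ζ} ∈ w. -/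
open Cardinal Set

universe u

/-- Let `κ` be infinite, `w` an ultrafilter on `κ`, `⟨v ζ : ζ < κ⟩` a family of
ultrafilters on `κ` with pairwise disjoint sets `W ζ ∈ v ζ`, and let `u` be an
ultrafilter on `κ` such that (i) `⋃_{ξ ∈ U} W ξ ∈ u` for every `U ∈ w`, and (ii)
`#{ζ : V ∈ v ζ} = κ` for every `V ∈ u`.  Then `u = Σ(⟨v ζ⟩, w)`, i.e. for every
`V ⊆ κ`, `V ∈ u ↔ {ζ < κ : V ∈ v ζ} ∈ w`. -/
theorem eq_sum_of_contains_blocks {K : Type u} (hK : aleph0 ≤ #K)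
    (w : Ultrafilter K) (v : K → Ultrafilter K) (W : K → Set K)
    (hdisj : ∀ ζ ξ : K, ζ ≠ ξ → Disjoint (W ζ) (W ξ))
    (hW : ∀ ζ : K, W ζ ∈ v ζ)
    (u : Ultrafilter K)
    (h1 : ∀ U ∈ w, (⋃ ξ ∈ U, W ξ) ∈ u)
    (h2 : ∀ V ∈ u, #{ζ : K | V ∈ v ζ} = #K) :
    ∀ V : Set K, V ∈ u ↔ {ζ : K | V ∈ v ζ} ∈ w := by
  have key : ∀ V : Set K, {ζ : K | V ∈ v ζ} ∈ w → V ∈ u := by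
    intro V hA
    by_contra hV
    have hVc : Vᶜ ∈ u := Ultrafilter.compl_mem_iff_notMem.mpr hV
    have hU : (⋃ ξ ∈ {ζ : K | V ∈ v ζ}, W ξ) ∈ u := h1 _ hA
    have hBu : (Vᶜ ∩ ⋃ ξ ∈ {ζ : K | V ∈ v ζ}, W ξ) ∈ u := Filter.inter_mem hVc hU
    have hcard := h2 _ hBu
    have hne : {ζ : K | (Vᶜ ∩ ⋃ ξ ∈ {ζ : K | V ∈ v ζ}, W ξ) ∈ v ζ}.Nonempty := by
      rw [Set.nonempty_coe_sort.symm, ← Cardinal.mk_ne_zero_iff, hcard]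
      exact (Cardinal.aleph0_pos.trans_le hK).ne'
    obtain ⟨ζ, hζ⟩ := hne
    have hnonempty : ((Vᶜ ∩ ⋃ ξ ∈ {ζ : K | V ∈ v ζ}, W ξ) ∩ W ζ).Nonempty :=
      Filter.nonempty_of_mem (Filter.inter_mem hζ (hW ζ))
    obtain ⟨x, ⟨hxVc, hxU⟩, hxW⟩ := hnonempty
    simp only [Set.mem_iUnion] at hxU
    obtain ⟨ξ, hξ, hxWξ⟩ := hxU
    have hζξ : ζ = ξ := by
      by_contra h
      exact (hdisj ζ ξ h).ne_of_mem hxW hxWξ rfl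
    have hVζ : V ∈ v ζ := hζξ ▸ hξ
    have hVcζ : Vᶜ ∈ v ζ :=
      (v ζ).sets_of_superset hζ Set.inter_subset_left
    exact (Ultrafilter.compl_mem_iff_notMem.mp hVcζ) hVζ
  intro V
  constructor
  · intro hVu
    by_contra hA
    have hAc : {ζ : K | V ∈ v ζ}ᶜ ∈ w := Ultrafilter.compl_mem_iff_notMem.mpr hA
    have hsub : {ζ : K | V ∈ v ζ}ᶜ ⊆ {ζ : K | Vᶜ ∈ v ζ} := fun ζ hζ =>
      Ultrafilter.compl_mem_iff_notMem.mpr hζ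
    have : Vᶜ ∈ u := key Vᶜ (w.sets_of_superset hAc hsub)
    exact (Ultrafilter.compl_mem_iff_notMem.mp this) hVu
  · exact key V
end
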